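/- There are exactly 33 isomorphism classes of rooted trees on 9 vertices whose in-degree type is the multiset {3,2,1,1,1,1,0,0,0} (type G: in-degree 0 with multiplicity 3, in-degree 1 with multiplicity 4, in-degree 2 with multiplicity 1, in-degree 3 with multiplicity 1). -/

import Mathlib

/-- A rooted tree on the vertex set `Fin n`, encoded by a parent function
`parent` with `parent root = root` such that every vertex reaches the root
under iteration of `parent`. -/
structure ParentTree (n : ℕ) where
  parent : Fin n → Fin n
  root : Fin n
  parent_root : parent root = root
  reaches_root : ∀ v : Fin n, ∃ k : ℕ, parent^[k] v = root

/-- Two rooted trees are isomorphic if some bijection of the vertices carries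
root to root and intertwines the parent functions (equivalently, it is a graph
isomorphism of the underlying trees carrying root to root). -/
def ParentTreeIso (n : ℕ) (t₁ t₂ : ParentTree n) : Prop :=
  ∃ σ : Equiv.Perm (Fin n),
    σ t₁.root = t₂.root ∧ ∀ v, σ (t₁.parent v) = t₂.parent (σ v)

/-- The in-degree of a vertex `v`: the number of vertices whose parent is `v`.
Since `parent root = root`, this counts the loop at the root, i.e. the root's
in-degree is its number of children plus one, while for any other vertex it is
the number of vertices (other than `v`) whose parent is `v`. -/
def inDeg {n : ℕ} (t : ParentTree n) (v : Fin n) : ℕ :=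
  (Finset.univ.filter (fun u => t.parent u = v)).card

/-- The in-degree type of a rooted tree: the multiset of in-degrees of its
vertices. -/
def inDegType {n : ℕ} (t : ParentTree n) : Multiset ℕ :=
  Multiset.map (inDeg t) (Finset.univ.val : Multiset (Fin n))

/-- In-degree type G. -/
def typeG : Multiset ℕ := ({3,2,1,1,1,1,0,0,0} : Multiset ℕ)

/-!
Every rooted tree has a canonical code (Aho–Hopcroft–Ullman): the plane tree in which the codes
of the children of each vertex are listed in increasing order. The code is invariant under
isomorphism, and it is a complete invariant: isomorphisms between the subtrees of children with
equal codes glue to an isomorphism of the whole trees. The in-degree type can be read off the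
code, so the isomorphism classes of type G correspond to the canonical plane trees on 9 vertices
of that type. These are found by running through all 1430 plane trees on 9 vertices; each of
the 33 survivors is the code of the tree given by its preorder labelling.
-/

inductive PlaneTree where
  | node : List PlaneTree → PlaneTree

namespace PlaneTree

mutual
def encode : PlaneTree → ℕ
  | node cs => encodeForest cs
def encodeForest : List PlaneTree → ℕ
  | [] => 0
  | c :: cs => Nat.pair (encode c) (encodeForest cs) + 1
end

mutual
theorem encode_injective : Function.Injective encode
  | node _, node _, h => congrArg node (encodeForest_injective h)
theorem encodeForest_injective : Function.Injective encodeForest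
  | [], [], _ => rfl
  | c :: cs, d :: ds, h => by
    obtain ⟨h₁, h₂⟩ := Nat.pair_eq_pair.mp (Nat.succ_injective h)
    rw [encode_injective h₁, encodeForest_injective h₂]
  | [], _ :: _, h | _ :: _, [], h => by simp [encodeForest] at h
end

instance : LinearOrder PlaneTree := LinearOrder.lift' encode encode_injective

/-- Insertion sort rather than `Multiset.sort`, so that the kernel can evaluate codes. -/
def sortedList (m : Multiset PlaneTree) : List PlaneTree :=
  Quot.liftOn m (List.insertionSort (· ≤ ·)) fun _ _ h =>
    ((List.perm_insertionSort _ _).trans (h.trans (List.perm_insertionSort _ _).symm))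
      |>.eq_of_pairwise' (List.pairwise_insertionSort _ _) (List.pairwise_insertionSort _ _)

@[simp]
theorem coe_sortedList (m : Multiset PlaneTree) : (sortedList m : Multiset PlaneTree) = m :=
  Quot.inductionOn m fun l => Quot.sound (List.perm_insertionSort _ l)

theorem pairwise_sortedList (m : Multiset PlaneTree) : (sortedList m).Pairwise (· ≤ ·) :=
  Quot.inductionOn m fun l => List.pairwise_insertionSort _ l

theorem sortedList_injective : Function.Injective sortedList := fun m₁ m₂ h => by
  rw [← coe_sortedList m₁, h, coe_sortedList]

@[simp]
theorem mem_sortedList {m : Multiset PlaneTree} {r : PlaneTree} : r ∈ sortedList m ↔ r ∈ m := by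
  rw [← Multiset.mem_coe, coe_sortedList]

@[simp]
theorem length_sortedList (m : Multiset PlaneTree) : (sortedList m).length = Multiset.card m := by
  rw [← Multiset.coe_card, coe_sortedList]

mutual
def size : PlaneTree → ℕ
  | node cs => sizeForest cs + 1
def sizeForest : List PlaneTree → ℕ
  | [] => 0
  | c :: cs => size c + sizeForest cs
end

theorem sizeForest_eq_sum (cs : List PlaneTree) : sizeForest cs = (cs.map size).sum := by
  induction cs with
  | nil => rfl
  | cons c cs ih => rw [sizeForest, ih, List.map_cons, List.sum_cons]

theorem size_node_sortedList (m : Multiset PlaneTree) :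
    (node (sortedList m)).size = (m.map size).sum + 1 := by
  rw [size, sizeForest_eq_sum, ← Multiset.sum_coe, ← Multiset.map_coe, coe_sortedList]

mutual
def childCounts : PlaneTree → Multiset ℕ
  | node cs => cs.length ::ₘ forestChildCounts cs
def forestChildCounts : List PlaneTree → Multiset ℕ
  | [] => 0
  | c :: cs => childCounts c + forestChildCounts cs
end

theorem forestChildCounts_sortedList (m : Multiset PlaneTree) :
    forestChildCounts (sortedList m) = (m.map childCounts).sum := by
  suffices ∀ cs : List PlaneTree,
      forestChildCounts cs = ((cs : Multiset PlaneTree).map childCounts).sum by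
    rw [this, coe_sortedList]
  intro cs
  induction cs with
  | nil => rfl
  | cons c cs ih =>
    rw [forestChildCounts, ih, ← Multiset.cons_coe, Multiset.map_cons, Multiset.sum_cons]

/-- As in `inDeg`, the root also counts its loop. -/
def inDegType : PlaneTree → Multiset ℕ
  | node cs => (cs.length + 1) ::ₘ forestChildCounts cs

mutual
def isCanonical : PlaneTree → Bool
  | node cs => decide (cs.Pairwise (· ≤ ·)) && isCanonicalForest cs
def isCanonicalForest : List PlaneTree → Bool
  | [] => true
  | c :: cs => isCanonical c && isCanonicalForest cs
end

theorem isCanonicalForest_iff (cs : List PlaneTree) :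
    isCanonicalForest cs ↔ ∀ c ∈ cs, isCanonical c := by
  induction cs with
  | nil => simp [isCanonicalForest]
  | cons c cs ih => simp [isCanonicalForest, ih]

theorem isCanonical_node_sortedList {m : Multiset PlaneTree} (h : ∀ r ∈ m, isCanonical r) :
    (node (sortedList m)).isCanonical := by
  simp only [isCanonical, Bool.and_eq_true, decide_eq_true_eq, isCanonicalForest_iff,
    mem_sortedList]
  exact ⟨pairwise_sortedList m, h⟩

/-- `forests f k` lists the forests of total size `k`, all of them as soon as `k ≤ f`: the fuel
`f` keeps the recursion structural, hence evaluable by the kernel. -/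
def forests : ℕ → ℕ → List (List PlaneTree)
  | _, 0 => [[]]
  | 0, _ + 1 => []
  | f + 1, k + 1 => (List.range (k + 1)).flatMap fun s =>
      (forests f s).flatMap fun ds => (forests f (k - s)).map fun cs => node ds :: cs

theorem mem_forests {f : ℕ} {cs : List PlaneTree} (h : sizeForest cs ≤ f) :
    cs ∈ forests f (sizeForest cs) := by
  induction f generalizing cs with
  | zero =>
    obtain _ | ⟨⟨ds⟩, cs⟩ := cs
    · simp [forests, sizeForest]
    · simp [sizeForest, size] at h
  | succ f ih =>
    obtain _ | ⟨⟨ds⟩, cs⟩ := cs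
    · simp [forests, sizeForest]
    · have hsize : sizeForest (node ds :: cs) = sizeForest ds + sizeForest cs + 1 := by
        simp only [sizeForest, size]; omega
      rw [hsize] at h ⊢
      simp only [forests, List.mem_flatMap, List.mem_range, List.mem_map]
      exact ⟨sizeForest ds, by omega, ds, ih (by omega), cs,
        by rw [Nat.add_sub_cancel_left]; exact ih (by omega), rfl⟩

def planeTrees : ℕ → List PlaneTree
  | 0 => []
  | n + 1 => (forests n n).map node

theorem mem_planeTrees {r : PlaneTree} {n : ℕ} (h : r.size = n) : r ∈ planeTrees n := by
  obtain ⟨cs⟩ := r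
  subst h
  exact List.mem_map_of_mem (mem_forests le_rfl)

def codesWithInDegType (n : ℕ) (D : Multiset ℕ) : List PlaneTree :=
  (planeTrees n).filter fun r => r.isCanonical && decide (r.inDegType = D)

theorem mem_codesWithInDegType {n : ℕ} {D : Multiset ℕ} {r : PlaneTree} :
    r ∈ codesWithInDegType n D ↔ r ∈ planeTrees n ∧ r.isCanonical ∧ r.inDegType = D := by
  simp [codesWithInDegType]

mutual
/-- `preorderParents r i p`: the parents of the vertices of `r` numbered in preorder from `i`,
the root of `r` hanging from `p`. -/
def preorderParents : PlaneTree → ℕ → ℕ → List ℕ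
  | node cs, i, p => p :: forestPreorderParents cs i (i + 1)
def forestPreorderParents : List PlaneTree → ℕ → ℕ → List ℕ
  | [], _, _ => []
  | c :: cs, p, i => preorderParents c i p ++ forestPreorderParents cs p (i + c.size)
end

def toParentFun (r : PlaneTree) (n : ℕ) : Fin (n + 1) → Fin (n + 1) :=
  fun v => Fin.ofNat _ ((r.preorderParents 0 0).getD v 0)

end PlaneTree

namespace ParentTree

open Finset PlaneTree

variable {n : ℕ} (t : ParentTree n)

def children (v : Fin n) : Finset (Fin n) :=
  {u | t.parent u = v ∧ u ≠ v}

open Classical in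
noncomputable def subtree (v : Fin n) : Finset (Fin n) :=
  {u | ∃ k, t.parent^[k] u = v}

variable {t}

@[simp]
theorem mem_children {u v : Fin n} : u ∈ t.children v ↔ t.parent u = v ∧ u ≠ v := by
  simp [children]

@[simp]
theorem mem_subtree {u v : Fin n} : u ∈ t.subtree v ↔ ∃ k, t.parent^[k] u = v := by
  simp [subtree]

theorem iterate_root (k : ℕ) : t.parent^[k] t.root = t.root :=
  Function.iterate_fixed t.parent_root k

theorem eq_root_of_iterate_eq_self {u : Fin n} {k : ℕ} (hk : 0 < k) (h : t.parent^[k] u = u) :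
    u = t.root := by
  obtain ⟨m, hm⟩ := t.reaches_root u
  calc u = t.parent^[k * m] u := ((Function.IsPeriodicPt.mul_const h m).eq).symm
    _ = t.parent^[k * m - m] (t.parent^[m] u) := by
      rw [← Function.iterate_add_apply, Nat.sub_add_cancel (Nat.le_mul_of_pos_left m hk)]
    _ = t.root := by rw [hm, iterate_root]

theorem parent_eq_self_iff {v : Fin n} : t.parent v = v ↔ v = t.root :=
  ⟨eq_root_of_iterate_eq_self (k := 1) one_pos, fun h => h ▸ t.parent_root⟩

theorem self_mem_subtree (v : Fin n) : v ∈ t.subtree v :=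
  mem_subtree.2 ⟨0, rfl⟩

theorem mem_subtree_of_mem_children {c v : Fin n} (h : c ∈ t.children v) : c ∈ t.subtree v :=
  mem_subtree.2 ⟨1, (mem_children.1 h).1⟩

theorem subtree_subset {u v : Fin n} (h : u ∈ t.subtree v) : t.subtree u ⊆ t.subtree v := by
  intro w hw
  obtain ⟨i, hi⟩ := mem_subtree.1 hw
  obtain ⟨j, hj⟩ := mem_subtree.1 h
  exact mem_subtree.2 ⟨j + i, by rw [Function.iterate_add_apply, hi, hj]⟩

theorem parent_mem_subtree {u v : Fin n} (h : u ∈ t.subtree v) (hne : u ≠ v) :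
    t.parent u ∈ t.subtree v := by
  obtain ⟨_ | k, hk⟩ := mem_subtree.1 h
  · exact absurd hk hne
  · exact mem_subtree.2 ⟨k, hk⟩

theorem notMem_subtree_of_mem_children {c v : Fin n} (h : c ∈ t.children v) :
    v ∉ t.subtree c := by
  obtain ⟨hpc, hcv⟩ := mem_children.1 h
  rintro hv
  obtain ⟨k, hk⟩ := mem_subtree.1 hv
  have hroot : v = t.root :=
    eq_root_of_iterate_eq_self k.succ_pos (by rw [Function.iterate_succ_apply', hk, hpc])
  exact hcv (by rw [← hk, hroot, iterate_root])

theorem mem_subtree_or_mem_subtree {u a b : Fin n} (ha : u ∈ t.subtree a)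
    (hb : u ∈ t.subtree b) : a ∈ t.subtree b ∨ b ∈ t.subtree a := by
  obtain ⟨i, rfl⟩ := mem_subtree.1 ha
  obtain ⟨j, rfl⟩ := mem_subtree.1 hb
  rcases le_total i j with hij | hji
  · exact .inl (mem_subtree.2 ⟨j - i, by rw [← Function.iterate_add_apply, Nat.sub_add_cancel hij]⟩)
  · exact .inr (mem_subtree.2 ⟨i - j, by rw [← Function.iterate_add_apply, Nat.sub_add_cancel hji]⟩)

theorem disjoint_subtree {v c c' : Fin n} (hc : c ∈ t.children v) (hc' : c' ∈ t.children v)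
    (hne : c ≠ c') : Disjoint (t.subtree c) (t.subtree c') := by
  suffices ∀ {a b}, a ∈ t.children v → b ∈ t.children v → a ≠ b → a ∉ t.subtree b by
    refine disjoint_left.2 fun u hu hu' => ?_
    rcases mem_subtree_or_mem_subtree hu hu' with h | h
    exacts [this hc hc' hne h, this hc' hc hne.symm h]
  intro a b ha hb hab hmem
  have := parent_mem_subtree hmem hab
  rw [(mem_children.1 ha).1] at this
  exact notMem_subtree_of_mem_children hb this

theorem exists_mem_children_of_mem_subtree {u v : Fin n} (hu : u ∈ t.subtree v) (hne : u ≠ v) :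
    ∃ c ∈ t.children v, u ∈ t.subtree c := by
  obtain ⟨k, hk⟩ := mem_subtree.1 hu
  induction k generalizing u with
  | zero => exact absurd hk hne
  | succ k ih =>
    rw [Function.iterate_succ_apply] at hk
    by_cases hpu : t.parent u = v
    · exact ⟨u, mem_children.2 ⟨hpu, hne⟩, self_mem_subtree u⟩
    · obtain ⟨c, hc, hpc⟩ := ih (mem_subtree.2 ⟨k, hk⟩) hpu hk
      exact ⟨c, hc, subtree_subset hpc (mem_subtree.2 ⟨1, rfl⟩)⟩

theorem notMem_biUnion_children_subtree (v : Fin n) :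
    v ∉ (t.children v).biUnion t.subtree := by
  simpa only [mem_biUnion, not_exists, not_and] using fun c => notMem_subtree_of_mem_children

theorem insert_biUnion_children_subtree (v : Fin n) :
    insert v ((t.children v).biUnion t.subtree) = t.subtree v := by
  ext u
  simp only [mem_insert, mem_biUnion]
  refine ⟨?_, fun hu => ?_⟩
  · rintro (rfl | ⟨c, hc, hu⟩)
    exacts [self_mem_subtree u, subtree_subset (mem_subtree_of_mem_children hc) hu]
  · by_cases hne : u = v
    exacts [.inl hne, .inr (exists_mem_children_of_mem_subtree hu hne)]

theorem subtree_val (v : Fin n) :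
    (t.subtree v).val = v ::ₘ (t.children v).val.bind fun c => (t.subtree c).val := by
  rw [← insert_biUnion_children_subtree, insert_val_of_notMem (notMem_biUnion_children_subtree v),
    ← disjiUnion_eq_biUnion _ _ fun c hc c' hc' => disjoint_subtree hc hc']
  rfl

theorem card_subtree_pos (v : Fin n) : 0 < #(t.subtree v) :=
  card_pos.2 ⟨v, self_mem_subtree v⟩

theorem card_subtree_lt {c v : Fin n} (h : c ∈ t.children v) : #(t.subtree c) < #(t.subtree v) :=
  card_lt_card <| (ssubset_iff_of_subset (subtree_subset (mem_subtree_of_mem_children h))).2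
    ⟨v, self_mem_subtree v, notMem_subtree_of_mem_children h⟩

theorem card_subtree_le (v : Fin n) : #(t.subtree v) ≤ n :=
  (card_le_univ _).trans_eq (Fintype.card_fin n)

theorem subtree_root : t.subtree t.root = univ :=
  eq_univ_of_forall fun u => mem_subtree.2 (t.reaches_root u)

theorem children_eq_erase (v : Fin n) :
    t.children v = ({u | t.parent u = v} : Finset _).erase v := by
  ext u
  simp [and_comm]

theorem inDeg_of_ne_root {v : Fin n} (hv : v ≠ t.root) : inDeg t v = #(t.children v) := by
  rw [children_eq_erase, erase_eq_of_notMem (by simpa [parent_eq_self_iff] using hv), inDeg]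

theorem inDeg_root : inDeg t t.root = #(t.children t.root) + 1 := by
  rw [children_eq_erase, card_erase_add_one (by simpa using t.parent_root), inDeg]

end ParentTree

namespace ParentTree

open Finset PlaneTree

variable {n : ℕ}

def codeAt (t : ParentTree n) : ℕ → Fin n → PlaneTree
  | 0, _ => node []
  | f + 1, v => node (sortedList ((t.children v).val.map (t.codeAt f)))

/-- The fuel `n` suffices since subtrees have at most `n` vertices, see `code_eq`. -/
def code (t : ParentTree n) (v : Fin n) : PlaneTree :=
  t.codeAt n v

variable {t : ParentTree n}

theorem codeAt_congr {f f' : ℕ} {v : Fin n} (hf : #(t.subtree v) ≤ f)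
    (hf' : #(t.subtree v) ≤ f') : t.codeAt f v = t.codeAt f' v := by
  induction f generalizing f' v with
  | zero => exact absurd hf (card_subtree_pos v).not_ge
  | succ f ih =>
    obtain ⟨f', rfl⟩ := Nat.exists_eq_add_one.2 ((card_subtree_pos v).trans_le hf')
    simp only [codeAt]
    congr 2
    refine Multiset.map_congr rfl fun c hc => ih ?_ ?_ <;>
      have := card_subtree_lt (mem_def.2 hc) <;> omega

theorem code_eq (v : Fin n) : t.code v = node (sortedList ((t.children v).val.map t.code)) := by
  have hn := card_subtree_le (t := t) v
  obtain ⟨m, rfl⟩ := Nat.exists_eq_add_one.2 ((card_subtree_pos v).trans_le hn)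
  rw [code, codeAt]
  congr 2
  refine Multiset.map_congr rfl fun c hc => codeAt_congr ?_ (card_subtree_le c)
  have := card_subtree_lt (mem_def.2 hc)
  omega

theorem children_perm {t₁ t₂ : ParentTree n} {σ : Equiv.Perm (Fin n)}
    (hσ : ∀ v, σ (t₁.parent v) = t₂.parent (σ v)) (v : Fin n) :
    t₂.children (σ v) = (t₁.children v).map σ.toEmbedding := by
  ext u
  obtain ⟨w, rfl⟩ := σ.surjective u
  simp [← hσ]

theorem codeAt_perm {t₁ t₂ : ParentTree n} {σ : Equiv.Perm (Fin n)}
    (hσ : ∀ v, σ (t₁.parent v) = t₂.parent (σ v)) (f : ℕ) (v : Fin n) :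
    t₂.codeAt f (σ v) = t₁.codeAt f v := by
  induction f generalizing v with
  | zero => rfl
  | succ f ih =>
    rw [codeAt, codeAt, children_perm hσ, map_val, Multiset.map_map]
    exact congrArg (node ∘ sortedList) (Multiset.map_congr rfl fun c _ => ih c)

theorem code_root_eq_of_iso {t₁ t₂ : ParentTree n} (h : ParentTreeIso n t₁ t₂) :
    t₁.code t₁.root = t₂.code t₂.root := by
  obtain ⟨σ, hroot, hσ⟩ := h
  rw [← hroot]
  exact (codeAt_perm hσ n t₁.root).symm

theorem isCanonical_codeAt (f : ℕ) (v : Fin n) : (t.codeAt f v).isCanonical := by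
  induction f generalizing v with
  | zero => rfl
  | succ f ih =>
    refine isCanonical_node_sortedList fun r hr => ?_
    obtain ⟨c, -, rfl⟩ := Multiset.mem_map.1 hr
    exact ih c

theorem size_code (v : Fin n) : (t.code v).size = #(t.subtree v) := by
  induction hk : #(t.subtree v) using Nat.strong_induction_on generalizing v with
  | _ k ih =>
  rw [← hk, code_eq, size_node_sortedList, card_def, subtree_val, Multiset.card_cons,
    Multiset.card_bind, Multiset.map_map]
  congr 1
  exact congrArg Multiset.sum (Multiset.map_congr rfl fun c hc =>
    ih _ (hk ▸ card_subtree_lt (mem_def.2 hc)) c rfl)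

theorem childCounts_code (v : Fin n) :
    (t.code v).childCounts = (t.subtree v).val.map fun u => #(t.children u) := by
  induction hk : #(t.subtree v) using Nat.strong_induction_on generalizing v with
  | _ k ih =>
  rw [code_eq, childCounts, length_sortedList, forestChildCounts_sortedList, subtree_val,
    Multiset.map_cons, Multiset.map_bind, Multiset.card_map, Multiset.map_map]
  congr 1
  exact congrArg Multiset.sum (Multiset.map_congr rfl fun c hc =>
    ih _ (hk ▸ card_subtree_lt (mem_def.2 hc)) c rfl)

theorem inDegType_eq_inDegType_code : inDegType t = (t.code t.root).inDegType := by
  have huniv : (univ : Finset (Fin n)).val = t.root ::ₘ univ.val.erase t.root :=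
    (Multiset.cons_erase (mem_univ_val _)).symm
  have hcounts := childCounts_code (t := t) t.root
  rw [subtree_root, huniv, Multiset.map_cons, code_eq, childCounts, length_sortedList,
    Multiset.card_map, card_val, Multiset.cons_inj_right] at hcounts
  rw [_root_.inDegType, huniv, Multiset.map_cons, inDeg_root, code_eq, PlaneTree.inDegType,
    length_sortedList, Multiset.card_map, card_val, hcounts]
  refine congrArg _ (Multiset.map_congr rfl fun u hu => inDeg_of_ne_root ?_)
  exact (univ.nodup.mem_erase_iff.1 hu).1

theorem code_root_mem_codesWithInDegType (t : ParentTree n) :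
    t.code t.root ∈ codesWithInDegType n (inDegType t) := by
  refine mem_codesWithInDegType.2 ⟨mem_planeTrees ?_, isCanonical_codeAt n t.root,
    inDegType_eq_inDegType_code.symm⟩
  rw [size_code, subtree_root, card_univ, Fintype.card_fin]

end ParentTree

theorem Set.BijOn.piecewise_union {α β : Type*} {s₁ s₂ : Set α} {t₁ t₂ : Set β} {f g : α → β}
    [∀ x, Decidable (x ∈ s₁)] (hf : Set.BijOn f s₁ t₁) (hg : Set.BijOn g s₂ t₂)
    (hs : Disjoint s₁ s₂) (ht : Disjoint t₁ t₂) :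
    Set.BijOn (s₁.piecewise f g) (s₁ ∪ s₂) (t₁ ∪ t₂) := by
  have hf' := hf.congr (s₁.piecewise_eqOn f g).symm
  have hg' := hg.congr ((s₁.piecewise_eqOn_compl f g).mono hs.subset_compl_left).symm
  refine hf'.union hg' ((Set.injOn_union hs).2 ⟨hf'.injOn, hg'.injOn, fun x hx y hy => ?_⟩)
  exact ht.ne_of_mem (hf'.mapsTo hx) (hg'.mapsTo hy)

namespace ParentTree

open Finset

variable {n : ℕ} {t₁ t₂ : ParentTree n}

structure IsForestIso (t₁ t₂ : ParentTree n) (s₁ s₂ : Finset (Fin n)) (φ : Fin n → Fin n) :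
    Prop where
  bijOn : Set.BijOn φ (s₁.biUnion t₁.subtree) (s₂.biUnion t₂.subtree)
  mapsTo : Set.MapsTo φ s₁ s₂
  map_parent : ∀ u ∈ s₁.biUnion t₁.subtree, u ∉ s₁ → φ (t₁.parent u) = t₂.parent (φ u)

theorem parent_mem_biUnion_subtree {t : ParentTree n} {s : Finset (Fin n)} {u : Fin n}
    (hu : u ∈ s.biUnion t.subtree) (hus : u ∉ s) : t.parent u ∈ s.biUnion t.subtree := by
  obtain ⟨c, hc, huc⟩ := mem_biUnion.1 hu
  exact mem_biUnion.2 ⟨c, hc, parent_mem_subtree huc (ne_of_mem_of_not_mem hc hus).symm⟩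

theorem IsForestIso.insert {a b : Fin n} {s₁ s₂ : Finset (Fin n)} {φa φ : Fin n → Fin n}
    (ha : IsForestIso t₁ t₂ {a} {b} φa) (hs : IsForestIso t₁ t₂ s₁ s₂ φ)
    (h₁ : Disjoint (t₁.subtree a) (s₁.biUnion t₁.subtree))
    (h₂ : Disjoint (t₂.subtree b) (s₂.biUnion t₂.subtree)) :
    IsForestIso t₁ t₂ (insert a s₁) (insert b s₂) ((t₁.subtree a).piecewise φa φ) := by
  have hbij := ha.bijOn
  simp only [singleton_biUnion] at hbij
  have hout {u} (hu : u ∈ s₁.biUnion t₁.subtree) : u ∉ t₁.subtree a :=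
    disjoint_right.1 h₁ hu
  refine ⟨?_, ?_, ?_⟩
  · rw [biUnion_insert, biUnion_insert, coe_union, coe_union, ← piecewise_coe]
    exact hbij.piecewise_union hs.bijOn (disjoint_coe.2 h₁) (disjoint_coe.2 h₂)
  · intro u hu
    rcases mem_insert.1 hu with rfl | hu
    · rw [piecewise_eq_of_mem _ _ _ (self_mem_subtree u)]
      exact mem_insert.2 (.inl (mem_singleton.1 (ha.mapsTo (mem_singleton_self u))))
    · rw [piecewise_eq_of_notMem _ _ _ (hout (mem_biUnion.2 ⟨u, hu, self_mem_subtree u⟩))]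
      exact mem_insert_of_mem (hs.mapsTo hu)
  · intro u hu hus
    rw [biUnion_insert, mem_union] at hu
    rw [mem_insert, not_or] at hus
    rcases hu with hu | hu
    · rw [piecewise_eq_of_mem _ _ _ hu, piecewise_eq_of_mem _ _ _ (parent_mem_subtree hu hus.1)]
      exact ha.map_parent u (by rwa [singleton_biUnion]) (by rw [mem_singleton]; exact hus.1)
    · rw [piecewise_eq_of_notMem _ _ _ (hout hu),
        piecewise_eq_of_notMem _ _ _ (hout (parent_mem_biUnion_subtree hu hus.2))]
      exact hs.map_parent u hu hus.2

theorem IsForestIso.update_children {v₁ v₂ : Fin n} {φ : Fin n → Fin n}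
    (h : IsForestIso t₁ t₂ (t₁.children v₁) (t₂.children v₂) φ) :
    IsForestIso t₁ t₂ {v₁} {v₂} (Function.update φ v₁ v₂) := by
  have hne {u} (hu : u ∈ (t₁.children v₁).biUnion t₁.subtree) : u ≠ v₁ :=
    ne_of_mem_of_not_mem hu (notMem_biUnion_children_subtree v₁)
  refine ⟨?_, by simp, ?_⟩
  · have hbij := (h.bijOn.congr fun u hu => (Function.update_of_ne (hne hu) v₂ φ).symm).insert
      (a := v₁) (by rw [Function.update_self]; exact notMem_biUnion_children_subtree v₂)
    rw [Function.update_self, ← coe_insert, ← coe_insert, insert_biUnion_children_subtree,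
      insert_biUnion_children_subtree] at hbij
    simpa only [singleton_biUnion] using hbij
  · intro u hu hu₁
    rw [singleton_biUnion] at hu
    rw [notMem_singleton] at hu₁
    rw [Function.update_of_ne hu₁]
    by_cases hpu : t₁.parent u = v₁
    · have hu' := h.mapsTo (mem_children.2 ⟨hpu, hu₁⟩)
      rw [hpu, Function.update_self, (mem_children.1 hu').1]
    · obtain ⟨c, hc, huc⟩ := exists_mem_children_of_mem_subtree hu hu₁
      have huB : u ∈ (t₁.children v₁).biUnion t₁.subtree := mem_biUnion.2 ⟨c, hc, huc⟩
      have huC : u ∉ t₁.children v₁ := fun h' => hpu (mem_children.1 h').1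
      rw [Function.update_of_ne hpu]
      exact h.map_parent u huB huC

theorem disjoint_subtree_biUnion {t : ParentTree n} {v a : Fin n} {m : Multiset (Fin n)}
    (h : a ::ₘ m ≤ (t.children v).val) :
    Disjoint (t.subtree a) (m.toFinset.biUnion t.subtree) := by
  have hmem {c} (hc : c ∈ a ::ₘ m) : c ∈ t.children v := Multiset.mem_of_le h hc
  have ha : a ∉ m := (Multiset.nodup_cons.1 (Multiset.nodup_of_le h (t.children v).nodup)).1
  refine (disjoint_biUnion_right _ _ _).2 fun c hc => ?_
  rw [Multiset.mem_toFinset] at hc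
  exact disjoint_subtree (hmem (Multiset.mem_cons_self a m)) (hmem (Multiset.mem_cons_of_mem hc))
    (ne_of_mem_of_not_mem hc ha).symm

theorem exists_isForestIso_of_rel {v₁ v₂ : Fin n} {m₁ m₂ : Multiset (Fin n)}
    (hrel : Multiset.Rel (fun a b => ∃ φ, IsForestIso t₁ t₂ {a} {b} φ) m₁ m₂)
    (hm₁ : m₁ ≤ (t₁.children v₁).val) (hm₂ : m₂ ≤ (t₂.children v₂).val) :
    ∃ φ, IsForestIso t₁ t₂ m₁.toFinset m₂.toFinset φ := by
  induction hrel with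
  | zero => exact ⟨id, by simp, by simp, by simp⟩
  | @cons a b m₁ m₂ hab _ ih =>
    obtain ⟨φa, ha⟩ := hab
    obtain ⟨φ, hφ⟩ := ih ((Multiset.le_cons_self m₁ a).trans hm₁)
      ((Multiset.le_cons_self m₂ b).trans hm₂)
    rw [Multiset.toFinset_cons, Multiset.toFinset_cons]
    exact ⟨_, ha.insert hφ (disjoint_subtree_biUnion hm₁) (disjoint_subtree_biUnion hm₂)⟩

theorem exists_isForestIso_of_code_eq {v₁ v₂ : Fin n} (h : t₁.code v₁ = t₂.code v₂) :
    ∃ φ, IsForestIso t₁ t₂ {v₁} {v₂} φ := by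
  induction hk : #(t₁.subtree v₁) using Nat.strong_induction_on generalizing v₁ v₂ with
  | _ k ih =>
  rw [code_eq, code_eq, PlaneTree.node.injEq] at h
  have hrel : Multiset.Rel (fun a b => t₁.code a = t₂.code b)
      (t₁.children v₁).val (t₂.children v₂).val := by
    rw [← Multiset.rel_map, Multiset.rel_eq]
    exact PlaneTree.sortedList_injective h
  obtain ⟨φ, hφ⟩ := exists_isForestIso_of_rel (v₁ := v₁) (v₂ := v₂)
    (hrel.mono fun a ha b _ hab => ih _ (hk ▸ card_subtree_lt (mem_def.2 ha)) hab rfl) le_rfl le_rfl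
  rw [val_toFinset, val_toFinset] at hφ
  exact ⟨_, hφ.update_children⟩

theorem iso_of_code_root_eq (h : t₁.code t₁.root = t₂.code t₂.root) : ParentTreeIso n t₁ t₂ := by
  obtain ⟨φ, hφ⟩ := exists_isForestIso_of_code_eq h
  have hbij := hφ.bijOn
  rw [singleton_biUnion, singleton_biUnion, subtree_root, subtree_root, coe_univ] at hbij
  have hroot : φ t₁.root = t₂.root := mem_singleton.1 (hφ.mapsTo (mem_singleton_self _))
  refine ⟨Equiv.ofBijective φ (Set.bijOn_univ.1 hbij), hroot, fun v => ?_⟩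
  by_cases hv : v = t₁.root
  · subst hv
    simp only [Equiv.ofBijective_apply, t₁.parent_root, hroot, t₂.parent_root]
  · exact hφ.map_parent v (by simp [subtree_root]) (by simpa using hv)

theorem card_classes_eq_card_image (n : ℕ) (D : Multiset ℕ) :
    Nat.card {c : Quot (ParentTreeIso n) // ∃ t : ParentTree n, c = Quot.mk _ t ∧ inDegType t = D}
      = Nat.card ((fun t : ParentTree n => t.code t.root) '' {t | inDegType t = D}) := by
  let code : Quot (ParentTreeIso n) → PlaneTree :=
    Quot.lift (fun t => t.code t.root) fun _ _ => code_root_eq_of_iso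
  refine Nat.card_congr (Equiv.ofBijective (fun c => ⟨code c.1, ?_⟩) ⟨?_, ?_⟩)
  · obtain ⟨t, ht, hD⟩ := c.2
    exact ⟨t, hD, by rw [ht]⟩
  · rintro ⟨_, t₁, rfl, _⟩ ⟨_, t₂, rfl, _⟩ h
    exact Subtype.ext (Quot.sound (iso_of_code_root_eq (congrArg Subtype.val h)))
  · rintro ⟨_, t, hD, rfl⟩
    exact ⟨⟨Quot.mk _ t, t, rfl, hD⟩, rfl⟩

def ofParent? (p : Fin (n + 1) → Fin (n + 1)) : Option (ParentTree (n + 1)) :=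
  if h : p 0 = 0 ∧ ∀ v, p^[n] v = 0 then some ⟨p, 0, h.1, fun v => ⟨n, h.2 v⟩⟩ else none

end ParentTree

open ParentTree PlaneTree in
theorem exists_code_root_eq_of_mem_typeG {r : PlaneTree} (hr : r ∈ codesWithInDegType 9 typeG) :
    ∃ t : ParentTree 9, t.code t.root = r := by
  have hrealize : ∀ r ∈ codesWithInDegType 9 typeG,
      (ofParent? (r.toParentFun 8)).map (fun t => t.code t.root) = some r := by
    decide +kernel
  obtain ⟨t, -, ht⟩ := Option.map_eq_some_iff.1 (hrealize r hr)
  exact ⟨t, ht⟩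

open ParentTree PlaneTree in
theorem image_code_root_typeG :
    (fun t : ParentTree 9 => t.code t.root) '' {t | inDegType t = typeG}
      = ((codesWithInDegType 9 typeG).toFinset : Set PlaneTree) := by
  ext r
  simp only [Set.mem_image, Set.mem_ofPred_eq, Finset.mem_coe, List.mem_toFinset]
  constructor
  · rintro ⟨t, ht, rfl⟩
    exact ht ▸ code_root_mem_codesWithInDegType t
  · intro hr
    obtain ⟨t, rfl⟩ := exists_code_root_eq_of_mem_typeG hr
    exact ⟨t, inDegType_eq_inDegType_code.trans (mem_codesWithInDegType.1 hr).2.2, rfl⟩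

/-- There are exactly 33 isomorphism classes of rooted trees on 9 vertices
whose in-degree type is the multiset `typeG`. -/
theorem card_parentTree_classes_9_typeG :
    Nat.card {c : Quot (ParentTreeIso 9) //
      ∃ t : ParentTree 9, c = Quot.mk _ t ∧ inDegType t = typeG} = 33 := by
  rw [ParentTree.card_classes_eq_card_image, image_code_root_typeG, Nat.card_coe_set_eq,
    Set.ncard_coe_finset]
  decide +kernel
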